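/- Let 𝔾 be a finite two-player game and let C ⊆ Σ be a compact set containing no Nash equilibrium of 𝔾. Then there exists δ₁ > 0 such that for every duplicate extension (𝔾̄, ι₁, ι₂) of 𝔾 and every vector ḡ = (ḡ₁, ḡ₂) ∈ ℝ^{S̄₁} × ℝ^{S̄₂} with ‖ḡ‖ ≤ δ₁, the perturbed game 𝔾̄ ⊕ ḡ has no Nash equilibrium σ̄ ∈ Σ̄ with r(σ̄) ∈ C. (Lemma C.5 of the paper, there stated for C = K¹ \ int(K^{1,2η}).) -/
import Mathlib


open Finset

noncomputable section

/-- The Dirac (vertex) mixed strategy concentrated on the pure strategy `s`. -/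
def dirac {S : Type*} [DecidableEq S] (s : S) : S → ℝ :=
  fun t => if t = s then 1 else 0

/-- Bilinear extension of a two-player payoff function to mixed strategies. -/
def mixedPayoff {S1 S2 : Type*} [Fintype S1] [Fintype S2]
    (G : S1 → S2 → ℝ) (x : S1 → ℝ) (y : S2 → ℝ) : ℝ :=
  ∑ s1 : S1, ∑ s2 : S2, x s1 * y s2 * G s1 s2

/-- Nash equilibrium of a finite two-player game. -/
def IsNash {S1 S2 : Type*} [Fintype S1] [Fintype S2] [DecidableEq S1] [DecidableEq S2]
    (G1 G2 : S1 → S2 → ℝ) (x : S1 → ℝ) (y : S2 → ℝ) : Prop :=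
  (∀ s1 : S1, mixedPayoff G1 (dirac s1) y ≤ mixedPayoff G1 x y) ∧
  (∀ s2 : S2, mixedPayoff G2 x (dirac s2) ≤ mixedPayoff G2 x y)

/-- `t` is a `μ`-reply for player 1 against the opponent strategy `y`. -/
def IsReply1 {S1 S2 : Type*} [Fintype S1] [Fintype S2] [DecidableEq S1]
    (G1 : S1 → S2 → ℝ) (μ : ℝ) (t : S1 → ℝ) (y : S2 → ℝ) : Prop :=
  ∀ s1 : S1, mixedPayoff G1 (dirac s1) y - μ ≤ mixedPayoff G1 t y

/-- `t` is a `μ`-reply for player 2 against the opponent strategy `x`. -/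
def IsReply2 {S1 S2 : Type*} [Fintype S1] [Fintype S2] [DecidableEq S2]
    (G2 : S1 → S2 → ℝ) (μ : ℝ) (t : S2 → ℝ) (x : S1 → ℝ) : Prop :=
  ∀ s2 : S2, mixedPayoff G2 x (dirac s2) - μ ≤ mixedPayoff G2 x t

/-- A duplicate extension of the finite two-player game `(G1, G2)`: a game `(H1, H2)`
whose pure strategies are duplicates of mixed strategies of the base game, containing
the original pure strategies as vertices. -/
structure DuplicateExtension {S1 S2 T1 T2 : Type*}
    [Fintype S1] [Fintype S2] [Fintype T1] [Fintype T2]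
    [DecidableEq S1] [DecidableEq S2]
    (G1 G2 : S1 → S2 → ℝ) (H1 H2 : T1 → T2 → ℝ) where
  e1 : S1 ↪ T1
  e2 : S2 ↪ T2
  iota1 : T1 → S1 → ℝ
  iota2 : T2 → S2 → ℝ
  iota1_mem : ∀ t1, iota1 t1 ∈ stdSimplex ℝ S1
  iota2_mem : ∀ t2, iota2 t2 ∈ stdSimplex ℝ S2
  iota1_vertex : ∀ s1, iota1 (e1 s1) = dirac s1
  iota2_vertex : ∀ s2, iota2 (e2 s2) = dirac s2
  payoff1_eq : ∀ t1 t2, H1 t1 t2 = mixedPayoff G1 (iota1 t1) (iota2 t2)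
  payoff2_eq : ∀ t1 t2, H2 t1 t2 = mixedPayoff G2 (iota1 t1) (iota2 t2)

/-- The base-game mixed strategy equivalent to a mixed strategy of a duplicate extension. -/
def reduceStrat {S T : Type*} [Fintype T] (iota : T → S → ℝ) (z : T → ℝ) : S → ℝ :=
  fun s => ∑ t : T, z t * iota t s

/-- The set of mixed strategy profiles of a two-player game. -/
def simplexProd (S1 S2 : Type*) [Fintype S1] [Fintype S2] :
    Set ((S1 → ℝ) × (S2 → ℝ)) :=
  (stdSimplex ℝ S1) ×ˢ (stdSimplex ℝ S2)

lemma mixedPayoff_reduce {S1 S2 T1 T2 : Type*} [Fintype S1] [Fintype S2] [Fintype T1] [Fintype T2]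
    (G : S1 → S2 → ℝ) (i1 : T1 → S1 → ℝ) (i2 : T2 → S2 → ℝ) (a : T1 → ℝ) (b : T2 → ℝ) :
    mixedPayoff (fun t1 t2 => mixedPayoff G (i1 t1) (i2 t2)) a b
      = mixedPayoff G (reduceStrat i1 a) (reduceStrat i2 b) := by
  simp only [mixedPayoff, reduceStrat, Finset.sum_mul, Finset.mul_sum]
  conv_lhs => enter [2, t1]; rw [Finset.sum_comm]
  rw [Finset.sum_comm]
  refine Finset.sum_congr rfl fun s1 _ => ?_
  conv_lhs => enter [2, t1]; rw [Finset.sum_comm]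
  rw [Finset.sum_comm]
  refine Finset.sum_congr rfl fun s2 _ => ?_
  rw [Finset.sum_comm]
  exact Finset.sum_congr rfl fun t2 _ => Finset.sum_congr rfl fun t1 _ => by ring

lemma mixedPayoff_add_left {S1 S2 : Type*} [Fintype S1] [Fintype S2]
    (H : S1 → S2 → ℝ) (g : S1 → ℝ) (x : S1 → ℝ) (y : S2 → ℝ) :
    mixedPayoff (fun a b => H a b + g a) x y
      = mixedPayoff H x y + (∑ a, x a * g a) * (∑ b, y b) := by
  simp only [mixedPayoff, mul_add, Finset.sum_add_distrib]
  congr 1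
  rw [Finset.sum_mul]
  refine Finset.sum_congr rfl fun a _ => ?_
  rw [Finset.mul_sum]
  exact Finset.sum_congr rfl fun b _ => by ring

lemma mixedPayoff_add_right {S1 S2 : Type*} [Fintype S1] [Fintype S2]
    (H : S1 → S2 → ℝ) (g : S2 → ℝ) (x : S1 → ℝ) (y : S2 → ℝ) :
    mixedPayoff (fun a b => H a b + g b) x y
      = mixedPayoff H x y + (∑ a, x a) * (∑ b, y b * g b) := by
  simp only [mixedPayoff, mul_add, Finset.sum_add_distrib]
  congr 1
  rw [Finset.sum_mul]
  refine Finset.sum_congr rfl fun a _ => ?_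
  rw [Finset.mul_sum]
  exact Finset.sum_congr rfl fun b _ => by ring

lemma reduceStrat_dirac {S T : Type*} [Fintype T] [DecidableEq T] (i : T → S → ℝ) (t0 : T) :
    reduceStrat i (dirac t0) = i t0 := by
  funext s
  simp [reduceStrat, dirac, ite_mul]

lemma sum_dirac {T : Type*} [Fintype T] [DecidableEq T] (t0 : T) :
    ∑ t, dirac t0 t = 1 := by
  simp [dirac]

lemma abs_dot_le {T : Type*} [Fintype T] (z g : T → ℝ) (hz : z ∈ stdSimplex ℝ T) :
    |∑ t, z t * g t| ≤ ‖g‖ := by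
  calc |∑ t, z t * g t| ≤ ∑ t, |z t * g t| := Finset.abs_sum_le_sum_abs _ _
    _ ≤ ∑ t, z t * ‖g‖ := by
        refine Finset.sum_le_sum fun t _ => ?_
        rw [abs_mul, abs_of_nonneg (hz.1 t)]
        exact mul_le_mul_of_nonneg_left ((Real.norm_eq_abs _) ▸ norm_le_pi_norm g t) (hz.1 t)
    _ = ‖g‖ := by rw [← Finset.sum_mul, hz.2, one_mul]

lemma mixedPayoff_cont {S1 S2 : Type*} [Fintype S1] [Fintype S2] (G : S1 → S2 → ℝ) :
    Continuous (fun σ : (S1 → ℝ) × (S2 → ℝ) => mixedPayoff G σ.1 σ.2) := by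
  unfold mixedPayoff
  fun_prop

/-- Lemma C.5. If `C ⊆ Σ` is compact and contains no Nash equilibrium
of the base game, there is `δ₁ > 0` such that for every duplicate extension and every
payoff bonus vector `(g1, g2)` of sup-norm at most `δ₁`, the perturbed extension has no
Nash equilibrium whose equivalent base-game profile lies in `C`. -/
theorem no_equilibrium_over_compact_in_all_perturbed_extensions
    {S1 S2 : Type*} [Fintype S1] [Fintype S2] [DecidableEq S1] [DecidableEq S2]
    [Nonempty S1] [Nonempty S2]
    (G1 G2 : S1 → S2 → ℝ)
    (C : Set ((S1 → ℝ) × (S2 → ℝ)))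
    (hCsub : C ⊆ simplexProd S1 S2)
    (hCcomp : IsCompact C)
    (hCnoNash : ∀ σ ∈ C, ¬ IsNash G1 G2 σ.1 σ.2) :
    ∃ δ₁ > (0 : ℝ),
      ∀ (T1 T2 : Type) [Fintype T1] [Fintype T2] [DecidableEq T1] [DecidableEq T2],
      ∀ (H1 H2 : T1 → T2 → ℝ) (E : DuplicateExtension G1 G2 H1 H2)
        (g1 : T1 → ℝ) (g2 : T2 → ℝ),
        ‖g1‖ ≤ δ₁ → ‖g2‖ ≤ δ₁ →
        ∀ (z1 : T1 → ℝ) (z2 : T2 → ℝ),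
          z1 ∈ stdSimplex ℝ T1 → z2 ∈ stdSimplex ℝ T2 →
          (reduceStrat E.iota1 z1, reduceStrat E.iota2 z2) ∈ C →
          ¬ IsNash (fun t1 t2 => H1 t1 t2 + g1 t1)
              (fun t1 t2 => H2 t1 t2 + g2 t2) z1 z2 := by
  rcases C.eq_empty_or_nonempty with hCne | hCne
  · refine ⟨1, one_pos, ?_⟩
    intro T1 T2 _ _ _ _ H1 H2 E g1 g2 _ _ z1 z2 _ _ hmem _
    rw [hCne] at hmem
    exact hmem
  · set f : ((S1 → ℝ) × (S2 → ℝ)) → ℝ := fun σ =>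
      max
        (Finset.univ.sup' Finset.univ_nonempty
          (fun s1 => mixedPayoff G1 (dirac s1) σ.2 - mixedPayoff G1 σ.1 σ.2))
        (Finset.univ.sup' Finset.univ_nonempty
          (fun s2 => mixedPayoff G2 σ.1 (dirac s2) - mixedPayoff G2 σ.1 σ.2)) with hf
    have hfc : Continuous f := by
      apply Continuous.max
      · apply Continuous.finset_sup'_apply Finset.univ_nonempty
        intro s1 _
        exact ((mixedPayoff_cont G1).comp
          (continuous_const.prodMk continuous_snd)).sub (mixedPayoff_cont G1)
      · apply Continuous.finset_sup'_apply Finset.univ_nonempty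
        intro s2 _
        exact ((mixedPayoff_cont G2).comp
          (continuous_fst.prodMk continuous_const)).sub (mixedPayoff_cont G2)
    obtain ⟨σ0, hσ0C, hmin⟩ := hCcomp.exists_isMinOn hCne hfc.continuousOn
    have hpos : 0 < f σ0 := by
      have hnotNash := hCnoNash σ0 hσ0C
      rw [IsNash, not_and_or] at hnotNash
      rcases hnotNash with h | h
      · push_neg at h
        obtain ⟨s1, hs1⟩ := h
        have : 0 < mixedPayoff G1 (dirac s1) σ0.2 - mixedPayoff G1 σ0.1 σ0.2 :=
          sub_pos.mpr hs1
        exact this.trans_le (le_max_of_le_left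
          (Finset.le_sup' (fun s1 => mixedPayoff G1 (dirac s1) σ0.2 - mixedPayoff G1 σ0.1 σ0.2)
            (Finset.mem_univ s1)))
      · push_neg at h
        obtain ⟨s2, hs2⟩ := h
        have : 0 < mixedPayoff G2 σ0.1 (dirac s2) - mixedPayoff G2 σ0.1 σ0.2 :=
          sub_pos.mpr hs2
        exact this.trans_le (le_max_of_le_right
          (Finset.le_sup' (fun s2 => mixedPayoff G2 σ0.1 (dirac s2) - mixedPayoff G2 σ0.1 σ0.2)
            (Finset.mem_univ s2)))
    refine ⟨f σ0 / 3, by positivity, ?_⟩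
    intro T1 T2 _ _ _ _ H1 H2 E g1 g2 hg1 hg2 z1 z2 hz1 hz2 hmem hNash
    set δ : ℝ := f σ0 / 3 with hδ
    set x : S1 → ℝ := reduceStrat E.iota1 z1 with hx
    set y : S2 → ℝ := reduceStrat E.iota2 z2 with hy
    have hH1 : H1 = fun t1 t2 => mixedPayoff G1 (E.iota1 t1) (E.iota2 t2) := by
      funext t1 t2; exact E.payoff1_eq t1 t2
    have hH2 : H2 = fun t1 t2 => mixedPayoff G2 (E.iota1 t1) (E.iota2 t2) := by
      funext t1 t2; exact E.payoff2_eq t1 t2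
    have hz1g : |∑ t, z1 t * g1 t| ≤ δ := (abs_dot_le z1 g1 hz1).trans hg1
    have hz2g : |∑ t, z2 t * g2 t| ≤ δ := (abs_dot_le z2 g2 hz2).trans hg2
    -- player 1 approximate best reply bound
    have key1 : ∀ s1 : S1,
        mixedPayoff G1 (dirac s1) y - mixedPayoff G1 x y ≤ 2 * δ := by
      intro s1
      have hnash := hNash.1 (E.e1 s1)
      rw [mixedPayoff_add_left H1 g1, mixedPayoff_add_left H1 g1] at hnash
      simp only [hH1, mixedPayoff_reduce] at hnash
      rw [hz2.2] at hnash
      rw [show reduceStrat E.iota1 (dirac (E.e1 s1)) = dirac s1 by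
        rw [reduceStrat_dirac, E.iota1_vertex]] at hnash
      have hd : ∑ a, dirac (E.e1 s1) a * g1 a = g1 (E.e1 s1) := by
        simp [dirac, ite_mul]
      rw [hd] at hnash
      have hge : |g1 (E.e1 s1)| ≤ δ :=
        le_trans ((Real.norm_eq_abs _) ▸ norm_le_pi_norm g1 (E.e1 s1)) hg1
      have h1 : -δ ≤ g1 (E.e1 s1) := neg_le_of_abs_le hge
      have h2 : ∑ t, z1 t * g1 t ≤ δ := le_of_abs_le hz1g
      simp only [mul_one] at hnash
      -- hnash : mixedPayoff G1 (dirac s1) y + g1 (e1 s1) ≤ mixedPayoff G1 x y + ∑ z1 g1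
      rw [← hx, ← hy] at hnash
      linarith
    have key2 : ∀ s2 : S2,
        mixedPayoff G2 x (dirac s2) - mixedPayoff G2 x y ≤ 2 * δ := by
      intro s2
      have hnash := hNash.2 (E.e2 s2)
      rw [mixedPayoff_add_right H2 g2, mixedPayoff_add_right H2 g2] at hnash
      simp only [hH2, mixedPayoff_reduce] at hnash
      rw [hz1.2] at hnash
      rw [show reduceStrat E.iota2 (dirac (E.e2 s2)) = dirac s2 by
        rw [reduceStrat_dirac, E.iota2_vertex]] at hnash
      have hd : ∑ a, dirac (E.e2 s2) a * g2 a = g2 (E.e2 s2) := by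
        simp [dirac, ite_mul]
      rw [hd] at hnash
      have hge : |g2 (E.e2 s2)| ≤ δ :=
        le_trans ((Real.norm_eq_abs _) ▸ norm_le_pi_norm g2 (E.e2 s2)) hg2
      have h1 : -δ ≤ g2 (E.e2 s2) := neg_le_of_abs_le hge
      have h2 : ∑ t, z2 t * g2 t ≤ δ := le_of_abs_le hz2g
      simp only [one_mul] at hnash
      rw [← hx, ← hy] at hnash
      linarith
    have hfxy : f (x, y) ≤ 2 * δ := by
      rw [hf]
      apply max_le
      · exact Finset.sup'_le _ _ fun s1 _ => key1 s1
      · exact Finset.sup'_le _ _ fun s2 _ => key2 s2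
    have hmin' : f σ0 ≤ f (x, y) := hmin hmem
    rw [hδ] at hfxy
    linarith
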